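/- arXiv:1803.03628 — 3 statements merged into one kernel-verified Lean document; each statement's English description precedes it below -/
import Mathlib

section
/- For every second-level route R' for satellite k in the multigraph G', the sequence in G obtained by expanding each arc (i,j,p) of R' with s(i,j,p) = k' ≠ 0 into the two-arc path i → k' → j (and keeping arcs with s(i,j,p) = 0 as the direct arc i → j) is a feasible second-level route for satellite k in G, visits the same customers in the same order, and has the same total cost as R'. -/
open scoped Classical

/-- An E2EVRP second-level instance. -/
structure E2E (V : Type) where
  Ns : Set V
  Nc : Set V
  Nr : Set V
  q : V → ℝ
  Q2 : ℝ
  L : ℝ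
  d : V → V → ℝ
  c : V → V → ℝ
  finNs : Ns.Finite
  finNc : Nc.Finite
  finNr : Nr.Finite
  disj_sc : Disjoint Ns Nc
  disj_sr : Disjoint Ns Nr
  disj_cr : Disjoint Nc Nr
  q_pos : ∀ i ∈ Nc, 0 < q i
  Q2_pos : 0 < Q2
  L_pos : 0 < L
  d_nonneg : ∀ i j, 0 ≤ d i j
  c_nonneg : ∀ i j, 0 ≤ c i j

namespace E2E

variable {V : Type}

/-- Cost of a path in `G` starting at a given vertex and visiting the list in order. -/
def costG (I : E2E V) : V → List V → ℝ
  | _, [] => 0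
  | u, v :: rest => I.d u v + I.costG v rest

/-- Battery feasibility in `G`: starting at vertex `u` with battery level `b`, every arc
decreases the level by its consumption, the level never drops below `0`, and the level is
reset to `L` after each visit to a charging station. -/
def feasG (I : E2E V) : ℝ → V → List V → Prop
  | _, _, [] => True
  | b, u, v :: rest =>
      I.c u v ≤ b ∧ I.feasG (if v ∈ I.Nr then I.L else b - I.c u v) v rest

/-- The subsequence of customers of a list of vertices. -/
noncomputable def custSeq (I : E2E V) : List V → List V
  | [] => []
  | v :: rest => if v ∈ I.Nc then v :: I.custSeq rest else I.custSeq rest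

/-- Total demand of the customers visited in a list of vertices. -/
noncomputable def demand (I : E2E V) (l : List V) : ℝ :=
  ((I.custSeq l).map I.q).sum

/-- `ArcOK I i j st` : `(i,j,st)` is an arc of the multigraph `G'` (`st = none` is the direct
arc, `st = some k` travels via charging station `k`). -/
def ArcOK (I : E2E V) (i j : V) (st : Option V) : Prop :=
  i ≠ j ∧ i ∈ I.Ns ∪ I.Nc ∧ j ∈ I.Ns ∪ I.Nc ∧ ¬(i ∈ I.Ns ∧ j ∈ I.Ns) ∧
    match st with
    | none => I.c i j ≤ I.L
    | some k => k ∈ I.Nr ∧ I.c i k ≤ I.L ∧ I.c k j ≤ I.L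

/-- Cost of an arc of `G'`. -/
def arcCost (I : E2E V) (i j : V) : Option V → ℝ
  | none => I.d i j
  | some k => I.d i k + I.d k j

/-- Consumption of an arc of `G'`. -/
def arcCons (I : E2E V) (i j : V) : Option V → ℝ
  | none => I.c i j
  | some k => I.c k j

/-- All arcs of a sequence of steps in `G'`, starting at a given vertex, satisfy `P`. -/
def ArcsSat (I : E2E V) (P : V → V → Option V → Prop) : V → List (V × Option V) → Prop
  | _, [] => True
  | i, (j, st) :: rest => P i j st ∧ I.ArcsSat P j rest

/-- All steps are genuine arcs of the multigraph `G'`. -/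
def arcsOK (I : E2E V) : V → List (V × Option V) → Prop :=
  I.ArcsSat I.ArcOK

/-- Cost in `G'` of a sequence of steps starting at a given vertex. -/
def costG' (I : E2E V) : V → List (V × Option V) → ℝ
  | _, [] => 0
  | i, (j, st) :: rest => I.arcCost i j st + I.costG' j rest

/-- Battery feasibility in `G'`: traversing a direct arc `(i,j,none)` with level `b` requires
`c i j ≤ b` and yields level `b - c i j`; traversing `(i,j,some k)` requires `c i k ≤ b` and
yields level `L - c k j`. -/
def feasG' (I : E2E V) : ℝ → V → List (V × Option V) → Prop
  | _, _, [] => True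
  | b, i, (j, none) :: rest => I.c i j ≤ b ∧ I.feasG' (b - I.c i j) j rest
  | b, i, (j, some k) :: rest => I.c i k ≤ b ∧ I.feasG' (I.L - I.c k j) j rest

/-- Battery levels at the successive vertices of a sequence of steps in `G'`. -/
def levelsG' (I : E2E V) : ℝ → V → List (V × Option V) → List ℝ
  | _, _, [] => []
  | b, i, (j, none) :: rest => (b - I.c i j) :: I.levelsG' (b - I.c i j) j rest
  | _, i, (j, some k) :: rest => (I.L - I.c k j) :: I.levelsG' (I.L - I.c k j) j rest

/-- A second-level route for satellite `k` in the original graph `G`; `seq` is the list of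
vertices visited after leaving `k` (hence ends with `k`). -/
def IsRouteG (I : E2E V) (k : V) (seq : List V) : Prop :=
  k ∈ I.Ns ∧ seq ≠ [] ∧ seq.getLast? = some k ∧
  (∀ v ∈ seq.dropLast, v ∈ I.Nc ∪ I.Nr) ∧
  (I.custSeq seq.dropLast).Nodup ∧
  List.Chain' (fun a b => ¬(a ∈ I.Nr ∧ b ∈ I.Nr)) (k :: seq) ∧
  I.demand seq.dropLast ≤ I.Q2 ∧
  I.feasG I.L k seq

/-- A second-level route for satellite `k` in the multigraph `G'`; `steps` is the list of
arcs traversed, each step recording its target vertex and the optional charging station. -/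
def IsRouteG' (I : E2E V) (k : V) (steps : List (V × Option V)) : Prop :=
  k ∈ I.Ns ∧ steps ≠ [] ∧ (steps.map Prod.fst).getLast? = some k ∧
  (∀ v ∈ (steps.map Prod.fst).dropLast, v ∈ I.Nc) ∧
  (steps.map Prod.fst).dropLast.Nodup ∧
  I.arcsOK k steps ∧
  I.demand (steps.map Prod.fst).dropLast ≤ I.Q2 ∧
  I.feasG' I.L k steps

/-- Expansion of a `G'` route into a `G` route: arcs via a station `k'` become the two-arc
path through `k'`, direct arcs stay direct. -/
def expand : List (V × Option V) → List V
  | [] => []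
  | (j, none) :: rest => j :: expand rest
  | (j, some k) :: rest => k :: j :: expand rest

/-- Contraction of a `G` route into a `G'` route: each visited charging station lying between
two non-station vertices is contracted into the corresponding arc of `G'`. -/
noncomputable def contract (I : E2E V) : List V → List (V × Option V)
  | [] => []
  | [v] => if v ∈ I.Nr then [] else [(v, none)]
  | v :: j :: rest =>
      if v ∈ I.Nr then (j, some v) :: I.contract rest
      else (v, none) :: I.contract (j :: rest)

end E2E

namespace E2E

variable {V : Type}

lemma expand_ne_nil (steps : List (V × Option V)) (h : steps ≠ []) :
    E2E.expand steps ≠ [] := by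
  match steps with
  | [] => exact absurd rfl h
  | (j, none) :: rest => simp [E2E.expand]
  | (j, some k) :: rest => simp [E2E.expand]

lemma expand_getLast? (steps : List (V × Option V)) :
    (E2E.expand steps).getLast? = (steps.map Prod.fst).getLast? := by
  induction steps with
  | nil => rfl
  | cons s rest ih =>
    obtain ⟨j, st⟩ := s
    cases rest with
    | nil =>
      cases st with
      | none => rfl
      | some k' => rfl
    | cons s' rest' =>
      have hne : E2E.expand (s' :: rest') ≠ [] := expand_ne_nil _ (by simp)
      obtain ⟨a, l, ha⟩ := List.exists_cons_of_ne_nil hne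
      cases st with
      | none =>
        simp only [E2E.expand, List.map_cons, ha, List.getLast?_cons_cons]
        rw [← ha, ih]
        simp
      | some k' =>
        simp only [E2E.expand, List.map_cons, ha, List.getLast?_cons_cons]
        rw [← ha, ih]
        simp

lemma expand_cost (I : E2E V) : ∀ (steps : List (V × Option V)) (i : V),
    I.costG i (E2E.expand steps) = I.costG' i steps := by
  intro steps
  induction steps with
  | nil => intro i; rfl
  | cons s rest ih =>
    obtain ⟨j, st⟩ := s
    intro i
    cases st with
    | none => simp [E2E.expand, costG, costG', arcCost, ih]
    | some k' => simp [E2E.expand, costG, costG', arcCost, ih]; ring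

lemma expand_custSeq (I : E2E V) : ∀ (steps : List (V × Option V)) (i : V),
    I.arcsOK i steps →
    I.custSeq (E2E.expand steps) = I.custSeq (steps.map Prod.fst) := by
  intro steps
  induction steps with
  | nil => intro i _; rfl
  | cons s rest ih =>
    obtain ⟨j, st⟩ := s
    intro i hok
    obtain ⟨harc, hrest⟩ := hok
    cases st with
    | none =>
      simp only [E2E.expand, List.map_cons, custSeq]
      rw [ih j hrest]
    | some k' =>
      have hk' : k' ∈ I.Nr := harc.2.2.2.2.1
      have hk'nc : k' ∉ I.Nc := fun hc => I.disj_cr.ne_of_mem hc hk' rfl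
      simp only [E2E.expand, List.map_cons, custSeq, if_neg hk'nc]
      rw [ih j hrest]

lemma custSeq_append (I : E2E V) : ∀ (l1 l2 : List V),
    I.custSeq (l1 ++ l2) = I.custSeq l1 ++ I.custSeq l2 := by
  intro l1 l2
  induction l1 with
  | nil => rfl
  | cons a t ih =>
    simp only [List.cons_append, custSeq, ih]
    split <;> simp [ih]

lemma custSeq_all (I : E2E V) : ∀ (l : List V), (∀ v ∈ l, v ∈ I.Nc) →
    I.custSeq l = l := by
  intro l
  induction l with
  | nil => intro _; rfl
  | cons a t ih =>
    intro h
    simp only [custSeq, if_pos (h a List.mem_cons_self)]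
    rw [ih (fun v hv => h v (List.mem_cons_of_mem a hv))]

lemma expand_feas (I : E2E V) : ∀ (steps : List (V × Option V)) (i : V) (b : ℝ),
    I.arcsOK i steps → (∀ v ∈ steps.map Prod.fst, v ∉ I.Nr) →
    I.feasG' b i steps → I.feasG b i (E2E.expand steps) := by
  intro steps
  induction steps with
  | nil => intro i b _ _ _; trivial
  | cons s rest ih =>
    obtain ⟨j, st⟩ := s
    intro i b hok hnr hfeas
    obtain ⟨harc, hrest⟩ := hok
    have hjnr : j ∉ I.Nr := hnr j (by simp)
    have hnr' : ∀ v ∈ rest.map Prod.fst, v ∉ I.Nr := fun v hv =>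
      hnr v (by simp [hv])
    cases st with
    | none =>
      obtain ⟨h1, h2⟩ := hfeas
      exact ⟨h1, by rw [if_neg hjnr]; exact ih j _ hrest hnr' h2⟩
    | some k' =>
      obtain ⟨hk'r, hik, hkj⟩ := harc.2.2.2.2
      obtain ⟨h1, h2⟩ := hfeas
      refine ⟨h1, ?_⟩
      rw [if_pos hk'r]
      exact ⟨hkj, by rw [if_neg hjnr]; exact ih j _ hrest hnr' h2⟩

lemma expand_chain (I : E2E V) : ∀ (steps : List (V × Option V)) (i : V),
    i ∉ I.Nr → (∀ v ∈ steps.map Prod.fst, v ∉ I.Nr) →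
    List.Chain' (fun a b => ¬(a ∈ I.Nr ∧ b ∈ I.Nr)) (i :: E2E.expand steps) := by
  intro steps
  induction steps with
  | nil => intro i _ _; simp [E2E.expand]; exact List.isChain_singleton _
  | cons s rest ih =>
    obtain ⟨j, st⟩ := s
    intro i hi hnr
    have hjnr : j ∉ I.Nr := hnr j (by simp)
    have hnr' : ∀ v ∈ rest.map Prod.fst, v ∉ I.Nr := fun v hv =>
      hnr v (by simp [hv])
    cases st with
    | none =>
      simp only [E2E.expand]
      exact List.isChain_cons_cons.mpr ⟨fun h => hi h.1, ih j hjnr hnr'⟩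
    | some k' =>
      simp only [E2E.expand]
      exact List.isChain_cons_cons.mpr ⟨fun h => hi h.1,
        List.isChain_cons_cons.mpr ⟨fun h => hjnr h.2, ih j hjnr hnr'⟩⟩

lemma expand_mem_dropLast (I : E2E V) : ∀ (steps : List (V × Option V)) (i : V),
    I.arcsOK i steps →
    ∀ v ∈ (E2E.expand steps).dropLast,
      v ∈ I.Nr ∨ v ∈ (steps.map Prod.fst).dropLast := by
  intro steps
  induction steps with
  | nil => intro i _ v hv; simp [E2E.expand] at hv
  | cons s rest ih =>
    obtain ⟨j, st⟩ := s
    intro i hok v hv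
    obtain ⟨harc, hrest⟩ := hok
    cases rest with
    | nil =>
      cases st with
      | none => simp [E2E.expand] at hv
      | some k' =>
        simp [E2E.expand] at hv
        subst hv
        exact Or.inl harc.2.2.2.2.1
    | cons s' rest' =>
      have hne : E2E.expand (s' :: rest') ≠ [] := expand_ne_nil _ (by simp)
      obtain ⟨a, l, ha⟩ := List.exists_cons_of_ne_nil hne
      have hmapne : ((s' :: rest').map Prod.fst) ≠ [] := by simp
      obtain ⟨a', l', ha'⟩ := List.exists_cons_of_ne_nil hmapne
      cases st with
      | none =>
        rw [show E2E.expand ((j, none) :: s' :: rest')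
            = j :: E2E.expand (s' :: rest') from rfl, ha,
          List.dropLast_cons₂, ← ha] at hv
        rcases List.mem_cons.mp hv with h | h
        · subst h
          right
          simp only [List.map_cons, ha', List.dropLast_cons₂]
          exact List.mem_cons_self
        · rcases ih j hrest v h with h' | h'
          · exact Or.inl h'
          · right
            rw [List.map_cons, ha', List.dropLast_cons₂]
            exact List.mem_cons_of_mem _ (ha' ▸ h')
      | some k' =>
        rw [show E2E.expand ((j, some k') :: s' :: rest')
            = k' :: j :: E2E.expand (s' :: rest') from rfl, ha,
          List.dropLast_cons₂, List.dropLast_cons₂, ← ha] at hv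
        rcases List.mem_cons.mp hv with h | h
        · subst h
          exact Or.inl harc.2.2.2.2.1
        · rcases List.mem_cons.mp h with h2 | h2
          · subst h2
            right
            simp only [List.map_cons, ha', List.dropLast_cons₂]
            exact List.mem_cons_self
          · rcases ih j hrest v h2 with h' | h'
            · exact Or.inl h'
            · right
              rw [List.map_cons, ha', List.dropLast_cons₂]
              exact List.mem_cons_of_mem _ (ha' ▸ h')

/-- The expansion of any feasible second-level route for satellite `k` in
the multigraph `G'` is a feasible second-level route for `k` in `G`, visiting the same
customers in the same order and with the same total cost. -/
theorem expand_isRouteG {V : Type} (I : E2E V) (k : V) (steps : List (V × Option V))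
    (h : I.IsRouteG' k steps) :
    I.IsRouteG k (E2E.expand steps) ∧
    I.custSeq (E2E.expand steps) = (steps.map Prod.fst).dropLast ∧
    I.costG k (E2E.expand steps) = I.costG' k steps := by
  obtain ⟨hks, hne, hlast, hmemc, hnodup, hok, hdem, hfeas⟩ := h
  -- map fst steps decomposes as dropLast ++ [k]
  have hdecomp : (steps.map Prod.fst).dropLast ++ [k] = steps.map Prod.fst :=
    List.dropLast_append_getLast? k hlast
  have hknc : k ∉ I.Nc := fun hc => I.disj_sc.ne_of_mem hks hc rfl
  have hknr : k ∉ I.Nr := fun hc => I.disj_sr.ne_of_mem hks hc rfl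
  -- every fst is not a charging station
  have hfstnr : ∀ v ∈ steps.map Prod.fst, v ∉ I.Nr := by
    intro v hv
    rw [← hdecomp] at hv
    rcases List.mem_append.mp hv with h' | h'
    · exact fun hr => I.disj_cr.ne_of_mem (hmemc v h') hr rfl
    · simp at h'; subst h'; exact hknr
  -- customers of expansion = interior fsts
  have hcust : I.custSeq (E2E.expand steps) = (steps.map Prod.fst).dropLast := by
    rw [expand_custSeq I steps k hok, ← hdecomp, custSeq_append,
      custSeq_all I _ hmemc]
    simp [custSeq, hknc]
  -- expand steps is nonempty and ends at k
  have hexne : E2E.expand steps ≠ [] := expand_ne_nil steps hne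
  have hexlast : (E2E.expand steps).getLast? = some k := by
    rw [expand_getLast?]; exact hlast
  -- custSeq of dropLast equals custSeq of whole list
  have hcustdrop : I.custSeq (E2E.expand steps).dropLast
      = I.custSeq (E2E.expand steps) := by
    conv_rhs => rw [← List.dropLast_append_getLast? k hexlast]
    rw [custSeq_append]
    simp [custSeq, hknc]
  refine ⟨⟨hks, hexne, hexlast, ?_, ?_, ?_, ?_, ?_⟩, hcust, expand_cost I steps k⟩
  · -- interior vertices in Nc ∪ Nr
    intro v hv
    rcases expand_mem_dropLast I steps k hok v hv with h' | h'
    · exact Or.inr h'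
    · exact Or.inl (hmemc v h')
  · rw [hcustdrop, hcust]; exact hnodup
  · exact expand_chain I steps k hknr hfstnr
  · unfold demand at hdem ⊢
    rw [hcustdrop, hcust]
    rwa [custSeq_all I _ hmemc] at hdem
  · exact expand_feas I steps k I.L hok hfstnr hfeas

end E2E
end

section
/- Arc replacement at a satellite (dominance, case i ∈ N_s): let R' be a feasible second-level route for satellite k in the multigraph G' whose first arc is (i,j,r₁) with i = k ∈ N_s, and suppose G' contains a parallel arc (i,j,r₂) with r₂ ≠ r₁ such that d(i,j,r₂) ≤ d(i,j,r₁) and c(i,j,r₂) ≤ c(i,j,r₁). Then the route obtained from R' by substituting (i,j,r₂) for (i,j,r₁) is a feasible second-level route for satellite k that visits the same customers in the same order and whose total cost is at most the cost of R'. -/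
open scoped Classical

namespace E2E

theorem feasG'_mono {V : Type} (I : E2E V) :
    ∀ (l : List (V × Option V)) (b b' : ℝ) (u : V), b ≤ b' →
      I.feasG' b u l → I.feasG' b' u l := by
  intro l
  induction l with
  | nil => intro b b' u _ _; trivial
  | cons hd tl ih =>
    rcases hd with ⟨j, st⟩
    rcases st with _ | k'
    · intro b b' u hbb h
      rcases h with ⟨h1, h2⟩
      exact ⟨h1.trans hbb, ih _ _ j (by linarith) h2⟩
    · intro b b' u hbb h
      rcases h with ⟨h1, h2⟩
      exact ⟨h1.trans hbb, h2⟩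

/-- Arc replacement at a satellite: if the first arc `(k,j,st₁)` of a
feasible second-level route for satellite `k` in `G'` is replaced by a parallel arc
`(k,j,st₂)`, `st₂ ≠ st₁`, with no larger cost and no larger consumption, the result is a
feasible second-level route for `k` visiting the same customers in the same order and with
total cost at most that of the original route. -/
theorem arc_replacement_satellite {V : Type} (I : E2E V) (k j : V)
    (st₁ st₂ : Option V) (rest : List (V × Option V))
    (h : I.IsRouteG' k ((j, st₁) :: rest))
    (hne : st₂ ≠ st₁)
    (harc : I.ArcOK k j st₂)
    (hd : I.arcCost k j st₂ ≤ I.arcCost k j st₁)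
    (hc : I.arcCons k j st₂ ≤ I.arcCons k j st₁) :
    I.IsRouteG' k ((j, st₂) :: rest) ∧
    ((j, st₂) :: rest).map Prod.fst = ((j, st₁) :: rest).map Prod.fst ∧
    I.costG' k ((j, st₂) :: rest) ≤ I.costG' k ((j, st₁) :: rest) := by
  obtain ⟨hk, hne', hlast, hcust, hnd, hok, hdem, hfeas⟩ := h
  have hfeasrest : I.feasG' (I.L - I.arcCons k j st₁) j rest := by
    rcases st₁ with _ | k₁
    · exact hfeas.2
    · exact hfeas.2
  have hfeas2 : I.feasG' I.L k ((j, st₂) :: rest) := by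
    rcases st₂ with _ | k₂
    · exact ⟨harc.2.2.2.2, I.feasG'_mono rest _ _ j (by
        have := hc; simp [arcCons] at this ⊢; linarith) hfeasrest⟩
    · exact ⟨harc.2.2.2.2.2.1, I.feasG'_mono rest _ _ j (by
        have := hc; simp [arcCons] at this ⊢; linarith) hfeasrest⟩
  refine ⟨⟨hk, by simp, ?_, ?_, ?_, ⟨harc, hok.2⟩, ?_, hfeas2⟩, rfl, ?_⟩
  · simpa using hlast
  · simpa using hcust
  · simpa using hnd
  · simpa using hdem
  · simp only [costG']
    have := I.costG'
    linarith [hd]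

end E2E
end

section
/- Correctness of the dynamic-programming insertion of charging stations: fix a sequence of vertex visits σ = (σ₀, σ₁, …, σ_K) with σ₀ = σ_K equal to a satellite and σ₁, …, σ_{K−1} distinct customers. For each consecutive pair (σ_{i−1}, σ_i), the admissible transitions are the arcs (σ_{i−1}, σ_i, p) of G' (direct travel, or travel via exactly one charging station). Define f(w, i) as the minimum, over all choices of arcs for transitions 1, …, i that start from battery level L at σ₀, satisfy all battery constraints, and arrive at σ_i with residual battery consumption exactly w (0 ≤ w ≤ L), of the total cost of the chosen arcs (f(w, i) = +∞ if no such choice exists), with f(0,0) = 0 and f(w,0) = +∞ for w > 0. Then f satisfies the Bellman recursion f(w,i) = min over p and over w' ∈ Ω(w, σ_{i−1}, σ_i, p) of f(w', i−1) + d(σ_{i−1}, σ_i, p), where Ω(w, j, i, p) = {w − c_{ji}} if s(j,i,p) = 0 and c_{ji} ≤ w, Ω(w,j,i,p) = {w' : 0 ≤ w' + c_{jk} ≤ L} if s(j,i,p) = k ≠ 0 and c_{ki} = w, and Ω(w,j,i,p) = ∅ otherwise; consequently min_{0 ≤ w ≤ L} f(w, K) equals the minimum cost of a battery-feasible assignment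 of at most one charging station to each transition of σ (and equals +∞ iff no battery-feasible assignment exists). -/
open scoped Classical

namespace E2E

/-- Traversal of an arc `(u,v,st)` of `G'` by a vehicle with residual battery consumption
`w` at `u`, ending with residual consumption `w'` at `v`: a direct arc requires
`w + c u v ≤ L` and yields `w' = w + c u v`; an arc via station `s` requires `w + c u s ≤ L`
and yields `w' = c s v`. -/
def StepTrans {V : Type} (I : E2E V) (u v : V) (st : Option V) (w w' : ℝ) : Prop :=
  match st with
  | none => w + I.c u v ≤ I.L ∧ w' = w + I.c u v
  | some s => w + I.c u s ≤ I.L ∧ w' = I.c s v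

/-- `Reach I σ i w γ`: there is a choice of arcs of `G'` for the transitions `1, …, i` of the
visit sequence `σ`, starting from residual consumption `0` at `σ 0`, satisfying all battery
constraints, arriving at `σ i` with residual consumption exactly `w`, of total cost `γ`. -/
inductive Reach {V : Type} (I : E2E V) (σ : ℕ → V) : ℕ → ℝ → ℝ → Prop
  | zero : Reach I σ 0 0 0
  | step {i : ℕ} {w γ w' : ℝ} (st : Option V) :
      Reach I σ i w γ → I.ArcOK (σ i) (σ (i+1)) st →
      I.StepTrans (σ i) (σ (i+1)) st w w' →
      Reach I σ (i+1) w' (γ + I.arcCost (σ i) (σ (i+1)) st)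

/-- The dynamic-programming value function: `fDP I σ w i` is the minimum total cost of a
battery-feasible choice of arcs for transitions `1, …, i` arriving at `σ i` with residual
consumption exactly `w` (`⊤` if no such choice exists). -/
noncomputable def fDP {V : Type} (I : E2E V) (σ : ℕ → V) (w : ℝ) (i : ℕ) : EReal :=
  sInf ((fun γ : ℝ => (γ : EReal)) '' {γ | Reach I σ i w γ})

/-- The set `Ω(w, j, i, st)` of residual consumptions at `j` from which traversing the arc
`(j,i,st)` arrives at `i` with residual consumption exactly `w`. -/
noncomputable def Omega {V : Type} (I : E2E V) (w : ℝ) (j i : V) (st : Option V) : Set ℝ :=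
  match st with
  | none => if I.c j i ≤ w then {w - I.c j i} else ∅
  | some s => if I.c s i = w then {w' | 0 ≤ w' + I.c j s ∧ w' + I.c j s ≤ I.L} else ∅


variable {V : Type}

/-- Auxiliary: addition of a real constant is an order isomorphism of `EReal`. -/
noncomputable def addRealIso (c : ℝ) : EReal ≃o EReal where
  toFun x := x + (c : EReal)
  invFun x := x - (c : EReal)
  left_inv x := EReal.add_sub_cancel_right
  right_inv x := by
    show x - (c:EReal) + (c:EReal) = x
    rw [sub_eq_add_neg, add_assoc, ← EReal.coe_neg, ← EReal.coe_add]
    simp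
  map_rel_iff' := by
    intro a b
    show a + (c:EReal) ≤ b + (c:EReal) ↔ a ≤ b
    constructor
    · intro h
      have := add_le_add_left h (-(c:EReal))
      rwa [add_assoc, add_assoc, ← EReal.coe_neg, ← EReal.coe_add, add_neg_cancel,
        EReal.coe_zero, add_zero, add_zero] at this
    · exact fun h => add_le_add_left h _

lemma sInf_add_coe (s : Set EReal) (c : ℝ) :
    sInf ((· + (c:EReal)) '' s) = sInf s + (c : EReal) :=
  (map_sInf (addRealIso c) s).symm

lemma sInf_iUnion' {ι : Sort*} (t : ι → Set EReal) :
    sInf (⋃ i, t i) = ⨅ i, sInf (t i) := by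
  refine le_antisymm (le_iInf fun i => sInf_le_sInf (Set.subset_iUnion t i)) (le_sInf ?_)
  rintro x hx
  obtain ⟨i, hi⟩ := Set.mem_iUnion.1 hx
  exact (iInf_le _ i).trans (sInf_le hi)

lemma Reach.nonneg {I : E2E V} {σ : ℕ → V} {i : ℕ} {w γ : ℝ}
    (h : Reach I σ i w γ) : 0 ≤ w := by
  induction h with
  | zero => exact le_refl 0
  | @step i w γ w' st _ hA hT ih =>
    cases st with
    | none => rw [hT.2]; exact add_nonneg ih (I.c_nonneg _ _)
    | some s => rw [hT.2]; exact I.c_nonneg _ _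

lemma Reach.le_L {I : E2E V} {σ : ℕ → V} {i : ℕ} {w γ : ℝ}
    (h : Reach I σ i w γ) : w ≤ I.L := by
  induction h with
  | zero => exact le_of_lt I.L_pos
  | @step i w γ w' st _ hA hT ih =>
    cases st with
    | none => rw [hT.2]; exact hT.1
    | some s => rw [hT.2]; exact hA.2.2.2.2.2.2

lemma reach_zero {I : E2E V} {σ : ℕ → V} {w γ : ℝ}
    (h : Reach I σ 0 w γ) : w = 0 ∧ γ = 0 := by
  cases h; exact ⟨rfl, rfl⟩

lemma reach_succ_iff {I : E2E V} {σ : ℕ → V} {i : ℕ} {w γ : ℝ} :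
    Reach I σ (i+1) w γ ↔ ∃ st w' γ', I.ArcOK (σ i) (σ (i+1)) st ∧
      I.StepTrans (σ i) (σ (i+1)) st w' w ∧ Reach I σ i w' γ' ∧
      γ = γ' + I.arcCost (σ i) (σ (i+1)) st := by
  constructor
  · intro h
    cases h with
    | step st h hA hT => exact ⟨st, _, _, hA, hT, h, rfl⟩
  · rintro ⟨st, w', γ', hA, hT, h, rfl⟩
    exact h.step st hA hT

/-- Correctness of the dynamic-programming insertion of charging stations:
for a visit sequence `σ₀, …, σ_K` with `σ₀ = σ_K` a satellite and `σ₁, …, σ_{K-1}` distinct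
customers, the value function satisfies `f(0,0) = 0`, `f(w,0) = ⊤` for `w > 0`, the Bellman
recursion, and `⨅_{0 ≤ w ≤ L} f(w,K)` equals the minimum cost of a battery-feasible
assignment of at most one charging station to each transition of `σ` (being `⊤` iff no
battery-feasible assignment exists). -/
theorem dp_insertion_correct {V : Type} (I : E2E V) (σ : ℕ → V) (K : ℕ) (hK : 1 ≤ K)
    (hsat : σ 0 ∈ I.Ns) (hend : σ 0 = σ K)
    (hcust : ∀ r, 1 ≤ r → r ≤ K - 1 → σ r ∈ I.Nc)
    (hdist : ∀ r s, 1 ≤ r → r ≤ K - 1 → 1 ≤ s → s ≤ K - 1 → σ r = σ s → r = s) :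
    I.fDP σ 0 0 = 0 ∧
    (∀ w : ℝ, 0 < w → I.fDP σ w 0 = ⊤) ∧
    (∀ i, 1 ≤ i → i ≤ K → ∀ w : ℝ, 0 ≤ w → w ≤ I.L →
      I.fDP σ w i =
        ⨅ (st : Option V) (_ : I.ArcOK (σ (i-1)) (σ i) st)
          (w' : ℝ) (_ : w' ∈ I.Omega w (σ (i-1)) (σ i) st),
          I.fDP σ w' (i-1) + (I.arcCost (σ (i-1)) (σ i) st : EReal)) ∧
    (⨅ w ∈ Set.Icc (0 : ℝ) I.L, I.fDP σ w K) =
      sInf ((fun γ : ℝ => (γ : EReal)) '' {γ | ∃ w, Reach I σ K w γ}) ∧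
    ((⨅ w ∈ Set.Icc (0 : ℝ) I.L, I.fDP σ w K) = ⊤ ↔ ¬ ∃ w γ, Reach I σ K w γ) := by
  classical
  have hL := I.L_pos
  -- Part 1
  have h1 : I.fDP σ 0 0 = 0 := by
    have hset : {γ : ℝ | Reach I σ 0 0 γ} = {0} := by
      ext γ
      constructor
      · intro h; exact (reach_zero h).2
      · rintro rfl; exact Reach.zero
    rw [fDP, hset, Set.image_singleton]
    simp
  -- Part 2
  have h2 : ∀ w : ℝ, 0 < w → I.fDP σ w 0 = ⊤ := by
    intro w hw
    have hset : {γ : ℝ | Reach I σ 0 w γ} = ∅ := by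
      ext γ
      simp only [Set.mem_setOf_eq, Set.mem_empty_iff_false, iff_false]
      intro h
      exact absurd (reach_zero h).1 (ne_of_gt hw)
    rw [fDP, hset, Set.image_empty, sInf_empty]
  -- Part 3 : Bellman recursion
  have h3 : ∀ i, 1 ≤ i → i ≤ K → ∀ w : ℝ, 0 ≤ w → w ≤ I.L →
      I.fDP σ w i =
        ⨅ (st : Option V) (_ : I.ArcOK (σ (i-1)) (σ i) st)
          (w' : ℝ) (_ : w' ∈ I.Omega w (σ (i-1)) (σ i) st),
          I.fDP σ w' (i-1) + (I.arcCost (σ (i-1)) (σ i) st : EReal) := by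
    intro i hi1 hiK w hw0 hwL
    obtain ⟨m, rfl⟩ : ∃ m, i = m + 1 := ⟨i - 1, (Nat.succ_pred_eq_of_pos hi1).symm⟩
    simp only [Nat.add_sub_cancel]
    apply le_antisymm
    · refine le_iInf fun st => le_iInf fun hA => le_iInf fun w' => le_iInf fun hw' => ?_
      have hT : I.StepTrans (σ m) (σ (m+1)) st w' w := by
        cases st with
        | none =>
          simp only [Omega] at hw'
          split_ifs at hw' with hc
          · simp only [Set.mem_singleton_iff] at hw'
            constructor
            · rw [hw']; linarith
            · rw [hw']; ring
          · exact absurd hw' (Set.notMem_empty _)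
        | some s =>
          simp only [Omega] at hw'
          split_ifs at hw' with hc
          · exact ⟨hw'.2, hc.symm⟩
          · exact absurd hw' (Set.notMem_empty _)
      simp only [fDP]
      rw [← sInf_add_coe]
      apply sInf_le_sInf
      rintro x ⟨y, ⟨γ', hγ', rfl⟩, rfl⟩
      exact ⟨γ' + I.arcCost (σ m) (σ (m+1)) st, Reach.step st hγ' hA hT,
        by simp [EReal.coe_add]⟩
    · rw [fDP]
      refine le_sInf ?_
      rintro x ⟨γ, hγ, rfl⟩
      obtain ⟨st, w', γ', hA, hT, hR, rfl⟩ := reach_succ_iff.1 hγ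
      have hw' : w' ∈ I.Omega w (σ m) (σ (m+1)) st := by
        cases st with
        | none =>
          have hc : I.c (σ m) (σ (m+1)) ≤ w := by
            have := hR.nonneg
            rw [hT.2]; linarith
          simp only [Omega, if_pos hc, Set.mem_singleton_iff]
          rw [hT.2]; ring
        | some s =>
          simp only [Omega, if_pos hT.2.symm, Set.mem_setOf_eq]
          exact ⟨add_nonneg hR.nonneg (I.c_nonneg _ _), hT.1⟩
      refine le_trans (iInf_le_of_le st (iInf_le_of_le hA (iInf_le_of_le w'
        (iInf_le_of_le hw' le_rfl)))) ?_
      simp only [EReal.coe_add]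
      exact add_le_add_left (sInf_le (Set.mem_image_of_mem (fun γ : ℝ => (γ : EReal)) hR)) _
  -- Part 4
  have h4 : (⨅ w ∈ Set.Icc (0 : ℝ) I.L, I.fDP σ w K) =
      sInf ((fun γ : ℝ => (γ : EReal)) '' {γ | ∃ w, Reach I σ K w γ}) := by
    have hset : {γ : ℝ | ∃ w, Reach I σ K w γ} =
        ⋃ w ∈ Set.Icc (0 : ℝ) I.L, {γ | Reach I σ K w γ} := by
      ext γ
      simp only [Set.mem_setOf_eq, Set.mem_iUnion, Set.mem_Icc, exists_prop]
      constructor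
      · rintro ⟨w, h⟩; exact ⟨w, ⟨h.nonneg, h.le_L⟩, h⟩
      · rintro ⟨w, _, h⟩; exact ⟨w, h⟩
    rw [hset]
    rw [Set.image_iUnion]
    rw [sInf_iUnion']
    refine iInf_congr fun w => ?_
    rw [Set.image_iUnion, sInf_iUnion']
    exact iInf_congr fun hw => rfl
  refine ⟨h1, h2, h3, h4, ?_⟩
  -- Part 5
  rw [h4]
  constructor
  · intro htop ⟨w, γ, h⟩
    have hle : sInf ((fun γ : ℝ => (γ : EReal)) '' {γ | ∃ w, Reach I σ K w γ}) ≤ (γ : EReal) :=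
      sInf_le ⟨γ, ⟨w, h⟩, rfl⟩
    rw [htop] at hle
    exact absurd (top_le_iff.1 hle) (EReal.coe_ne_top γ)
  · intro hne
    have hset : {γ : ℝ | ∃ w, Reach I σ K w γ} = ∅ := by
      ext γ
      simp only [Set.mem_setOf_eq, Set.mem_empty_iff_false, iff_false]
      rintro ⟨w, h⟩
      exact hne ⟨w, γ, h⟩
    rw [hset, Set.image_empty, sInf_empty]

end E2E
end
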